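/- arXiv:1706.03400 — 7 statements merged into one kernel-verified Lean document; each statement's English description precedes it below -/
import Mathlib

section
/- Let $X \in \mathbb{R}^{n \times p}$ with $n \geq p$ have full column rank, $\Sigma = X^T X$, and let $s \in \mathbb{R}^p$ with $\mathrm{diag}(s) \preceq 2\Sigma$. Then a matrix $\tilde{X} \in \mathbb{R}^{n \times p}$ satisfies $\tilde{X}^T \tilde{X} = \Sigma$ and $X^T \tilde{X} = \Sigma - \mathrm{diag}(s)$ if and only if $\tilde{X} = X(I - \Sigma^{-1}\mathrm{diag}(s)) + UC$, where $U \in \mathbb{R}^{n \times (n-p)}$ is an orthonormal matrix with $U^T X = 0$ and $C \in \mathbb{R}^{(n-p) \times p}$ satisfies $C^T C = 2\,\mathrm{diag}(s) - \mathrm{diag}(s)\Sigma^{-1}\mathrm{diag}(s)$. -/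
/-!
Write `Σ = XᵀX` (invertible by the rank hypothesis), `D = diag s` and `K = X (1 - Σ⁻¹D)`,
so that `XᵀK = Σ - D` and `KᵀK = Σ - (2D - DΣ⁻¹D)`. Every `X̃` with `XᵀX̃ = Σ - D` is `K + R`
with `XᵀR = 0`, and for such a decomposition `X̃ᵀX̃ = KᵀK + RᵀR`. Hence the Gram condition says
exactly `RᵀR = 2D - DΣ⁻¹D`. Finally, the columns of `R` lie in `ker Xᵀ`, of dimension `n - p`;
an orthonormal basis of it gives `U` with `R = U (UᵀR)`, and `C = UᵀR`.
-/

open Matrix Module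

namespace Matrix

theorem isUnit_det_of_rank_eq_card {K n : Type*} [Field K] [Fintype n] [DecidableEq n]
    {A : Matrix n n K} (hA : A.rank = Fintype.card n) : IsUnit A.det := by
  have hrange : LinearMap.range A.mulVecLin = ⊤ :=
    Submodule.eq_top_of_finrank_eq (by rw [finrank_fintype_fun_eq_card]; exact hA)
  rw [← isUnit_iff_isUnit_det, ← mulVec_surjective_iff_isUnit]
  exact LinearMap.range_eq_top.mp hrange

theorem isUnit_det_conjTranspose_mul_self_of_rank_eq {K m n : Type*} [Field K] [PartialOrder K]
    [StarRing K] [StarOrderedRing K] [Fintype m] [Fintype n] [DecidableEq n]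
    {X : Matrix m n K} (hX : X.rank = Fintype.card n) : IsUnit (Xᴴ * X).det :=
  isUnit_det_of_rank_eq_card (by rw [rank_conjTranspose_mul_self, hX])

end Matrix

section OrthonormalColumns

variable {𝕜 m ι : Type*} [RCLike 𝕜] [Fintype m] [Fintype ι]
  {V : Submodule 𝕜 (EuclideanSpace 𝕜 m)}

noncomputable def OrthonormalBasis.toColumnMatrix (b : OrthonormalBasis ι 𝕜 V) :
    Matrix m ι 𝕜 :=
  Matrix.of fun i j => (b j : EuclideanSpace 𝕜 m) i

theorem OrthonormalBasis.conjTranspose_toColumnMatrix_mul_self [DecidableEq ι]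
    (b : OrthonormalBasis ι 𝕜 V) :
    b.toColumnMatrixᴴ * b.toColumnMatrix = 1 := by
  ext j k
  rw [one_apply, ← orthonormal_iff_ite.mp b.orthonormal j k]
  simp [toColumnMatrix, mul_apply, EuclideanSpace.inner_eq_star_dotProduct, dotProduct, mul_comm]

theorem OrthonormalBasis.toColumnMatrix_mul_conjTranspose_mul {o : Type*}
    (b : OrthonormalBasis ι 𝕜 V) (R : Matrix m o 𝕜)
    (hR : ∀ k, WithLp.toLp 2 (R.col k) ∈ V) :
    b.toColumnMatrix * (b.toColumnMatrixᴴ * R) = R := by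
  ext i k
  have := congrArg (fun v : V => (v : EuclideanSpace 𝕜 m) i) (b.sum_repr' ⟨_, hR k⟩)
  simpa [toColumnMatrix, mul_apply, EuclideanSpace.inner_eq_star_dotProduct, dotProduct, mul_comm]
    using this

end OrthonormalColumns

namespace Matrix

theorem mul_eq_zero_iff_forall_mulVec_col {R m n o : Type*} [NonUnitalNonAssocSemiring R]
    [Fintype m] {A : Matrix n m R} {B : Matrix m o R} :
    A * B = 0 ↔ ∀ k, A *ᵥ B.col k = 0 := by
  simp only [← ext_iff, funext_iff, mul_apply, mulVec, dotProduct, col_apply, zero_apply,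
    Pi.zero_apply]
  exact forall_comm

open scoped ComplexOrder in
theorem exists_orthonormal_complement {𝕜 ι : Type*} [RCLike 𝕜] [Fintype ι] {n r : ℕ}
    (X : Matrix (Fin n) ι 𝕜) (hX : X.rank = r) :
    ∃ U : Matrix (Fin n) (Fin (n - r)) 𝕜, Uᴴ * U = 1 ∧ Uᴴ * X = 0 ∧
      ∀ {o : Type*} (R : Matrix (Fin n) o 𝕜), Xᴴ * R = 0 → U * (Uᴴ * R) = R := by
  let V : Submodule 𝕜 (EuclideanSpace 𝕜 (Fin n)) :=
    (LinearMap.ker Xᴴ.mulVecLin).comap (WithLp.linearEquiv 2 𝕜 (Fin n → 𝕜)).toLinearMap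
  have hV : finrank 𝕜 V = n - r := by
    have := LinearMap.finrank_range_add_finrank_ker Xᴴ.mulVecLin
    rw [show V = _ from Submodule.comap_equiv_eq_map_symm _ _, LinearEquiv.finrank_map_eq]
    rw [finrank_fin_fun, ← rank, rank_conjTranspose, hX] at this
    omega
  let b := (stdOrthonormalBasis 𝕜 V).reindex (finCongr hV)
  refine ⟨b.toColumnMatrix, b.conjTranspose_toColumnMatrix_mul_self, ?_, fun R hR =>
    b.toColumnMatrix_mul_conjTranspose_mul R (mul_eq_zero_iff_forall_mulVec_col.mp hR)⟩
  rw [← conjTranspose_conjTranspose X, ← conjTranspose_mul, conjTranspose_eq_zero]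
  exact mul_eq_zero_iff_forall_mulVec_col.mpr fun j => (b j).2

variable {R m n : Type*} [CommRing R] [Fintype m] [Fintype n]

theorem transpose_mul_self_add_of_transpose_mul_eq_zero {o : Type*} {X : Matrix m n R}
    {E : Matrix m o R} (A : Matrix n o R) (h : Xᵀ * E = 0) :
    (X * A + E)ᵀ * (X * A + E) = (X * A)ᵀ * (X * A) + Eᵀ * E := by
  have hEX : Eᵀ * X = 0 := by rw [← transpose_transpose X, ← transpose_mul, h, transpose_zero]
  have hAE : (X * A)ᵀ * E = 0 := by rw [transpose_mul, Matrix.mul_assoc, h, Matrix.mul_zero]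
  have hEA : Eᵀ * (X * A) = 0 := by rw [← Matrix.mul_assoc, hEX, Matrix.zero_mul]
  rw [transpose_add, Matrix.add_mul, Matrix.mul_add, Matrix.mul_add, hAE, hEA, add_zero, zero_add]

variable [DecidableEq n] {X : Matrix m n R} (D : Matrix n n R)

theorem transpose_mul_mul_one_sub_inv_mul (hX : IsUnit (Xᵀ * X).det) :
    Xᵀ * (X * (1 - (Xᵀ * X)⁻¹ * D)) = Xᵀ * X - D := by
  rw [← Matrix.mul_assoc, Matrix.mul_sub, Matrix.mul_one, mul_nonsing_inv_cancel_left _ _ hX]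

theorem transpose_mul_self_mul_one_sub_inv_mul (hX : IsUnit (Xᵀ * X).det) (hD : Dᵀ = D) :
    (X * (1 - (Xᵀ * X)⁻¹ * D))ᵀ * (X * (1 - (Xᵀ * X)⁻¹ * D)) =
      Xᵀ * X - ((2 : R) • D - D * (Xᵀ * X)⁻¹ * D) := by
  have hG : (Xᵀ * X)⁻¹ᵀ = (Xᵀ * X)⁻¹ := by
    rw [transpose_nonsing_inv, transpose_mul, transpose_transpose]
  rw [transpose_mul, transpose_sub, transpose_one, transpose_mul, hG, hD, Matrix.mul_assoc,
    transpose_mul_mul_one_sub_inv_mul D hX, Matrix.sub_mul, Matrix.one_mul, Matrix.mul_sub,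
    nonsing_inv_mul_cancel_right _ _ hX, two_smul]
  abel

end Matrix

theorem knockoff_construction_iff_general (n p : ℕ)
    (X : Matrix (Fin n) (Fin p) ℝ) (hrank : X.rank = p)
    (s : Fin p → ℝ)
    (Xt : Matrix (Fin n) (Fin p) ℝ) :
    (Xtᵀ * Xt = Xᵀ * X ∧ Xᵀ * Xt = Xᵀ * X - Matrix.diagonal s) ↔
      (∃ (U : Matrix (Fin n) (Fin (n - p)) ℝ) (C : Matrix (Fin (n - p)) (Fin p) ℝ),
        Uᵀ * U = 1 ∧ Uᵀ * X = 0 ∧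
        Cᵀ * C = (2 : ℝ) • Matrix.diagonal s
            - Matrix.diagonal s * (Xᵀ * X)⁻¹ * Matrix.diagonal s ∧
        Xt = X * (1 - (Xᵀ * X)⁻¹ * Matrix.diagonal s) + U * C) := by
  have hX : IsUnit (Xᵀ * X).det :=
    isUnit_det_conjTranspose_mul_self_of_rank_eq (X := X) (by rw [hrank, Fintype.card_fin])
  set D := diagonal s
  set K := X * (1 - (Xᵀ * X)⁻¹ * D)
  have hXK : Xᵀ * K = Xᵀ * X - D := transpose_mul_mul_one_sub_inv_mul D hX
  have hKK : Kᵀ * K = Xᵀ * X - ((2 : ℝ) • D - D * (Xᵀ * X)⁻¹ * D) :=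
    transpose_mul_self_mul_one_sub_inv_mul D hX (diagonal_transpose s)
  constructor
  · rintro ⟨hGram, hCross⟩
    obtain ⟨U, hUU, hUX, hproj⟩ := exists_orthonormal_complement X hrank
    simp only [conjTranspose_eq_transpose_of_trivial] at hUU hUX hproj
    have hXR : Xᵀ * (Xt - K) = 0 := by rw [Matrix.mul_sub, hCross, hXK, sub_self]
    have hRR : (Xt - K)ᵀ * (Xt - K) = (2 : ℝ) • D - D * (Xᵀ * X)⁻¹ * D := by
      have h : (K + (Xt - K))ᵀ * (K + (Xt - K)) = Kᵀ * K + (Xt - K)ᵀ * (Xt - K) :=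
        transpose_mul_self_add_of_transpose_mul_eq_zero _ hXR
      rw [add_sub_cancel, hGram, hKK] at h
      rw [eq_sub_of_add_eq' h.symm, sub_sub_cancel]
    refine ⟨U, Uᵀ * (Xt - K), hUU, hUX, ?_, ?_⟩
    · rw [transpose_mul, transpose_transpose, Matrix.mul_assoc, hproj _ hXR, hRR]
    · rw [hproj _ hXR, add_sub_cancel]
  · rintro ⟨U, C, hUU, hUX, hCC, rfl⟩
    have hXU : Xᵀ * (U * C) = 0 := by
      rw [← Matrix.mul_assoc, ← transpose_transpose U, ← transpose_mul, hUX, transpose_zero,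
        Matrix.zero_mul]
    refine ⟨?_, by rw [Matrix.mul_add, hXK, hXU, add_zero]⟩
    rw [transpose_mul_self_add_of_transpose_mul_eq_zero _ hXU, hKK, transpose_mul,
      Matrix.mul_assoc Cᵀ, ← Matrix.mul_assoc Uᵀ, hUU, Matrix.one_mul, hCC, sub_add_cancel]

theorem knockoff_construction_iff (n p : ℕ) (hnp : p ≤ n)
    (X : Matrix (Fin n) (Fin p) ℝ) (hrank : X.rank = p)
    (s : Fin p → ℝ)
    (hs : ((2 : ℝ) • (Xᵀ * X) - Matrix.diagonal s).PosSemidef)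
    (Xt : Matrix (Fin n) (Fin p) ℝ) :
    (Xtᵀ * Xt = Xᵀ * X ∧ Xᵀ * Xt = Xᵀ * X - Matrix.diagonal s) ↔
      (∃ (U : Matrix (Fin n) (Fin (n - p)) ℝ) (C : Matrix (Fin (n - p)) (Fin p) ℝ),
        Uᵀ * U = 1 ∧ Uᵀ * X = 0 ∧
        Cᵀ * C = (2 : ℝ) • Matrix.diagonal s
            - Matrix.diagonal s * (Xᵀ * X)⁻¹ * Matrix.diagonal s ∧
        Xt = X * (1 - (Xᵀ * X)⁻¹ * Matrix.diagonal s) + U * C) :=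
  knockoff_construction_iff_general n p X hrank s Xt
end

section
/- (Sufficiency direction of the knockoff construction.) Let $X \in \mathbb{R}^{n\times p}$ have full column rank with $\Sigma = X^TX$ invertible, $U \in \mathbb{R}^{n\times(n-p)}$ orthonormal with $U^TX = 0$, and $C \in \mathbb{R}^{(n-p)\times p}$ with $C^TC = 2\,\mathrm{diag}(s) - \mathrm{diag}(s)\Sigma^{-1}\mathrm{diag}(s)$. If $\tilde{X} = X(I - \Sigma^{-1}\mathrm{diag}(s)) + UC$, then $X^T\tilde{X} = \Sigma - \mathrm{diag}(s)$ and $\tilde{X}^T\tilde{X} = \Sigma$. -/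
open Matrix

theorem knockoff_construction_sufficiency (n p : ℕ)
    (X : Matrix (Fin n) (Fin p) ℝ) (hrank : X.rank = p)
    (hinv : IsUnit (Xᵀ * X))
    (s : Fin p → ℝ)
    (U : Matrix (Fin n) (Fin (n - p)) ℝ) (C : Matrix (Fin (n - p)) (Fin p) ℝ)
    (hU : Uᵀ * U = 1) (hUX : Uᵀ * X = 0)
    (hC : Cᵀ * C = (2 : ℝ) • Matrix.diagonal s
        - Matrix.diagonal s * (Xᵀ * X)⁻¹ * Matrix.diagonal s)
    (Xt : Matrix (Fin n) (Fin p) ℝ)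
    (hXt : Xt = X * (1 - (Xᵀ * X)⁻¹ * Matrix.diagonal s) + U * C) :
    Xᵀ * Xt = Xᵀ * X - Matrix.diagonal s ∧ Xtᵀ * Xt = Xᵀ * X := by
  have hdet : IsUnit (Xᵀ * X).det := (Matrix.isUnit_iff_isUnit_det _).mp hinv
  have hmi : (Xᵀ * X) * (Xᵀ * X)⁻¹ = 1 := Matrix.mul_nonsing_inv _ hdet
  have him : (Xᵀ * X)⁻¹ * (Xᵀ * X) = 1 := Matrix.nonsing_inv_mul _ hdet
  have hXU : Xᵀ * U = 0 := by
    have := congrArg Matrix.transpose hUX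
    simpa using this
  have hinvT : ((Xᵀ * X)⁻¹)ᵀ = (Xᵀ * X)⁻¹ := by
    rw [Matrix.transpose_nonsing_inv, Matrix.transpose_mul, Matrix.transpose_transpose]
  have h1 : Xᵀ * Xt = Xᵀ * X - Matrix.diagonal s := by
    subst hXt
    rw [Matrix.mul_add, ← Matrix.mul_assoc, Matrix.mul_sub, Matrix.mul_one,
      ← Matrix.mul_assoc, ← Matrix.mul_assoc, hmi, Matrix.one_mul,
      hXU]
    simp
  refine ⟨h1, ?_⟩
  have h2 : Xtᵀ = (1 - Matrix.diagonal s * (Xᵀ * X)⁻¹) * Xᵀ + Cᵀ * Uᵀ := by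
    rw [hXt]
    simp [Matrix.transpose_add, Matrix.transpose_mul, Matrix.transpose_sub,
      hinvT, Matrix.mul_add, Matrix.add_mul]
  rw [h2, Matrix.add_mul, Matrix.mul_assoc, h1, Matrix.mul_assoc, hXt,
    Matrix.mul_add, ← Matrix.mul_assoc Uᵀ X, hUX, Matrix.zero_mul, zero_add,
    ← Matrix.mul_assoc Uᵀ U, hU, Matrix.one_mul, hC]
  rw [Matrix.sub_mul, Matrix.one_mul, Matrix.mul_sub, Matrix.mul_assoc,
    Matrix.mul_assoc, him, Matrix.mul_one, two_smul]
  abel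
end

section
/- Let $X$ have unit-norm columns ($X^TX = \Sigma$ with $\Sigma_{ii} = 1$) and suppose $\mathrm{diag}(s) \preceq 2\Sigma$. If two columns satisfy $\langle X_i, X_j \rangle \geq 1 - \delta$ for some $i \neq j$, then $\min(s_i, s_j) \leq \|X_i - X_j\|_2^2 \leq 2\delta$. -/
open Matrix

/-!
Evaluating the quadratic form of `2XᵀX - diag(s) ⪰ 0` at `eᵢ - eⱼ` gives
`sᵢ + sⱼ ≤ 2‖Xᵢ - Xⱼ‖²`, and `min(sᵢ, sⱼ)` is at most that average. For unit columns
`‖Xᵢ - Xⱼ‖² = 2 - 2⟨Xᵢ, Xⱼ⟩ ≤ 2δ`.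
-/

theorem Matrix.PosSemidef.apply_add_apply_le {R ι : Type*} [CommRing R] [PartialOrder R]
    [AddLeftMono R] [StarRing R] [TrivialStar R] [Fintype ι] [DecidableEq ι]
    {M : Matrix ι ι R} (hM : M.PosSemidef) (i j : ι) :
    M i j + M j i ≤ M i i + M j j := by
  have h := hM.dotProduct_mulVec_nonneg (Pi.single i 1 - Pi.single j 1)
  rw [star_trivial, mulVec_sub, sub_dotProduct, dotProduct_sub, dotProduct_sub] at h
  simp only [mulVec_single_one, single_one_dotProduct, col_apply] at h
  rw [← sub_nonneg]
  convert h using 1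
  ring

theorem Finset.sum_sub_sq_eq {R ι : Type*} [CommRing R] (s : Finset ι) (a b : ι → R) :
    ∑ k ∈ s, (a k - b k) ^ 2 = ∑ k ∈ s, a k ^ 2 + ∑ k ∈ s, b k ^ 2 - 2 * ∑ k ∈ s, a k * b k := by
  simp only [sub_sq, sum_add_distrib, sum_sub_distrib, mul_sum, mul_assoc]
  ring

theorem knockoff_correlated_columns_small_s (n p : ℕ)
    (X : Matrix (Fin n) (Fin p) ℝ)
    (hnorm : ∀ i : Fin p, ∑ k, X k i ^ 2 = 1)
    (s : Fin p → ℝ)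
    (hs : ((2 : ℝ) • (Xᵀ * X) - Matrix.diagonal s).PosSemidef)
    (δ : ℝ) (i j : Fin p) (hij : i ≠ j)
    (hcorr : 1 - δ ≤ ∑ k, X k i * X k j) :
    min (s i) (s j) ≤ ∑ k, (X k i - X k j) ^ 2 ∧
      ∑ k, (X k i - X k j) ^ 2 ≤ 2 * δ := by
  have hgram (a b : Fin p) : (Xᵀ * X) a b = ∑ k, X k a * X k b := by
    simp only [mul_apply, transpose_apply]
  have hquad := hs.apply_add_apply_le i j
  simp only [Matrix.sub_apply, Matrix.smul_apply, diagonal_apply_eq, diagonal_apply_ne _ hij,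
    diagonal_apply_ne _ hij.symm, hgram, ← sq, hnorm, smul_eq_mul] at hquad
  have hdist : ∑ k, (X k i - X k j) ^ 2 = 2 - 2 * ∑ k, X k i * X k j := by
    rw [Finset.sum_sub_sq_eq, hnorm, hnorm]; ring
  have hsymm : ∑ k, X k j * X k i = ∑ k, X k i * X k j := by simp only [mul_comm]
  rw [hdist]
  constructor <;> linarith [min_le_left (s i) (s j), min_le_right (s i) (s j)]
end

section
/- Consider, for fixed data $d \in \mathbb{R}^p$, positive weights $s_i > 0$, and an even penalty function $P: \mathbb{R}^p \to \mathbb{R}$ of the form $P(\alpha) = P(|\alpha|)$ (depending only on the absolute values of coordinates), a minimizer $\tilde\alpha$ of $f(\alpha) = \sum_{i=1}^p \frac{s_i}{4}(\alpha_i - d_i)^2 + P(\alpha)$. Then for every $j$ with $d_j \neq 0$, either $\tilde\alpha_j = 0$ or $\mathrm{sign}(\tilde\alpha_j) = \mathrm{sign}(d_j)$. -/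
theorem half_penalized_sign_lemma (p : ℕ)
    (d s : Fin p → ℝ) (hs : ∀ i, 0 < s i)
    (P : (Fin p → ℝ) → ℝ)
    (hP : ∀ (α : Fin p → ℝ) (j : Fin p), P (Function.update α j (-(α j))) = P α)
    (atil : Fin p → ℝ)
    (hmin : ∀ α : Fin p → ℝ,
      (∑ i, s i / 4 * (atil i - d i) ^ 2) + P atil ≤
      (∑ i, s i / 4 * (α i - d i) ^ 2) + P α)
    (j : Fin p) (hdj : d j ≠ 0) :
    atil j = 0 ∨ Real.sign (atil j) = Real.sign (d j) := by
  have key : ∀ x : ℝ, ∑ i, s i / 4 * (Function.update atil j x i - d i) ^ 2 =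
      (∑ i ∈ Finset.univ.erase j, s i / 4 * (atil i - d i) ^ 2) +
        s j / 4 * (x - d j) ^ 2 := by
    intro x
    rw [← Finset.sum_erase_add _ _ (Finset.mem_univ j)]
    congr 1
    · exact Finset.sum_congr rfl fun i hi => by
        rw [Function.update_of_ne (Finset.ne_of_mem_erase hi)]
    · rw [Function.update_self]
  have h := hmin (Function.update atil j (-(atil j)))
  rw [hP, key] at h
  have h0 : ∑ i, s i / 4 * (atil i - d i) ^ 2 =
      (∑ i ∈ Finset.univ.erase j, s i / 4 * (atil i - d i) ^ 2) +
        s j / 4 * (atil j - d j) ^ 2 := by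
    have := key (atil j)
    rwa [Function.update_eq_self] at this
  rw [h0] at h
  have hsj := hs j
  have hprod : 0 ≤ atil j * d j := by nlinarith
  by_cases h0' : atil j = 0
  · exact Or.inl h0'
  · right
    rcases lt_trichotomy (atil j) 0 with hlt | heq | hgt
    · have hdneg : d j < 0 := by
        rcases lt_trichotomy (d j) 0 with h1 | h2 | h3
        · exact h1
        · exact absurd h2 hdj
        · nlinarith
      rw [Real.sign_of_neg hlt, Real.sign_of_neg hdneg]
    · exact absurd heq h0'
    · have hdpos : 0 < d j := by
        rcases lt_trichotomy (d j) 0 with h1 | h2 | h3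
        · nlinarith
        · exact absurd h2 hdj
        · exact h3
      rw [Real.sign_of_pos hgt, Real.sign_of_pos hdpos]
end

section
/- Let $X, \tilde{X}$ satisfy the knockoff conditions with $\tilde{X}^TX = \Sigma - S$, $S = \mathrm{diag}(s)$, $s_i > 0$, and suppose $\Sigma - S/2$ is invertible. Let $y = X\beta + \epsilon$ and let $(\hat\beta, \tilde\beta)$ be the least squares coefficients from regressing $y$ on $[X\ \tilde{X}]$. Then $\hat\beta + \tilde\beta = \beta + (\Sigma - S/2)^{-1}\left(\frac{X+\tilde{X}}{2}\right)^T\epsilon$ and $\hat\beta - \tilde\beta = \beta + (S/2)^{-1}\left(\frac{X-\tilde{X}}{2}\right)^T\epsilon$. -/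
open Matrix

theorem knockoff_least_squares_formula (n p : ℕ)
    (X Xt : Matrix (Fin n) (Fin p) ℝ) (s : Fin p → ℝ)
    (h1 : Xtᵀ * Xt = Xᵀ * X)
    (h2 : Xtᵀ * X = Xᵀ * X - Matrix.diagonal s)
    (hspos : ∀ i, 0 < s i)
    (hinv : IsUnit (Xᵀ * X - (1 / 2 : ℝ) • Matrix.diagonal s))
    (β : Fin p → ℝ) (ε : Fin n → ℝ) (y : Fin n → ℝ)
    (hy : y = X *ᵥ β + ε)
    (bh bt : Fin p → ℝ)
    (hne1 : Xᵀ *ᵥ (X *ᵥ bh + Xt *ᵥ bt) = Xᵀ *ᵥ y)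
    (hne2 : Xtᵀ *ᵥ (X *ᵥ bh + Xt *ᵥ bt) = Xtᵀ *ᵥ y) :
    bh + bt = β + (Xᵀ * X - (1 / 2 : ℝ) • Matrix.diagonal s)⁻¹ *ᵥ
        (((1 / 2 : ℝ) • (X + Xt))ᵀ *ᵥ ε) ∧
    bh - bt = β + ((1 / 2 : ℝ) • Matrix.diagonal s)⁻¹ *ᵥ
        (((1 / 2 : ℝ) • (X - Xt))ᵀ *ᵥ ε) := by
  set A := Xᵀ * X with hA
  set D := Matrix.diagonal s with hD
  set M := A - (1/2 : ℝ) • D with hM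
  -- Xᵀ * Xt = A - D
  have hXXt : Xᵀ * Xt = A - D := by
    have := congrArg Matrix.transpose h2
    simpa [Matrix.transpose_mul, Matrix.transpose_sub, Matrix.transpose_transpose,
      Matrix.diagonal_transpose, hA, hD] using this
  -- cancellation lemma
  have cancel : ∀ (N : Matrix (Fin p) (Fin p) ℝ), IsUnit N →
      ∀ u v : Fin p → ℝ, N *ᵥ u = N *ᵥ v → u = v := by
    intro N hN u v huv
    have hdet : IsUnit N.det := (Matrix.isUnit_iff_isUnit_det N).mp hN
    have : N⁻¹ *ᵥ (N *ᵥ u) = N⁻¹ *ᵥ (N *ᵥ v) := by rw [huv]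
    simpa [Matrix.mulVec_mulVec, Matrix.nonsing_inv_mul N hdet] using this
  have hdetM : IsUnit M.det := (Matrix.isUnit_iff_isUnit_det M).mp hinv
  have hDhalf : IsUnit ((1/2 : ℝ) • D) := by
    rw [Matrix.isUnit_iff_isUnit_det]
    have : ((1/2 : ℝ) • D).det = ∏ i, ((1/2 : ℝ) * s i) := by
      rw [hD, ← Matrix.diagonal_smul, Matrix.det_diagonal]
      simp [Pi.smul_apply, smul_eq_mul]
    rw [this]
    exact isUnit_iff_ne_zero.mpr (Finset.prod_ne_zero_iff.mpr
      fun i _ => by have := hspos i; positivity)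
  have hdetDhalf : IsUnit ((1/2 : ℝ) • D).det := (Matrix.isUnit_iff_isUnit_det _).mp hDhalf
  -- normal equations expanded
  have e1 : A *ᵥ bh + (A - D) *ᵥ bt = A *ᵥ β + Xᵀ *ᵥ ε := by
    have := hne1
    rw [hy] at this
    simpa [Matrix.mulVec_add, Matrix.mulVec_mulVec, hXXt, hA] using this
  have e2 : (A - D) *ᵥ bh + A *ᵥ bt = (A - D) *ᵥ β + Xtᵀ *ᵥ ε := by
    have := hne2
    rw [hy] at this
    simpa [Matrix.mulVec_add, Matrix.mulVec_mulVec, h1, h2, hA, hD] using this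
  constructor
  · apply cancel M hinv
    have expand : M *ᵥ (β + M⁻¹ *ᵥ (((1/2 : ℝ) • (X + Xt))ᵀ *ᵥ ε)) =
        M *ᵥ β + ((1/2 : ℝ) • (X + Xt))ᵀ *ᵥ ε := by
      rw [Matrix.mulVec_add, Matrix.mulVec_mulVec, Matrix.mul_nonsing_inv M hdetM,
        Matrix.one_mulVec]
    rw [expand]
    funext i
    have h1i := congrFun e1 i
    have h2i := congrFun e2 i
    simp only [hM, Matrix.sub_mulVec, Matrix.add_mulVec, Matrix.smul_mulVec,
      Matrix.mulVec_add, Matrix.transpose_smul, Matrix.transpose_add, Matrix.add_mulVec,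
      Pi.add_apply, Pi.sub_apply, Pi.smul_apply, smul_eq_mul] at *
    linarith
  · apply cancel ((1/2 : ℝ) • D) hDhalf
    have expand : ((1/2 : ℝ) • D) *ᵥ (β + ((1/2 : ℝ) • D)⁻¹ *ᵥ (((1/2 : ℝ) • (X - Xt))ᵀ *ᵥ ε)) =
        ((1/2 : ℝ) • D) *ᵥ β + ((1/2 : ℝ) • (X - Xt))ᵀ *ᵥ ε := by
      rw [Matrix.mulVec_add, Matrix.mulVec_mulVec, Matrix.mul_nonsing_inv _ hdetDhalf,
        Matrix.one_mulVec]
    rw [expand]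
    funext i
    have h1i := congrFun e1 i
    have h2i := congrFun e2 i
    simp only [Matrix.sub_mulVec, Matrix.add_mulVec, Matrix.smul_mulVec,
      Matrix.mulVec_sub, Matrix.transpose_smul, Matrix.transpose_sub,
      Pi.add_apply, Pi.sub_apply, Pi.smul_apply, smul_eq_mul] at *
    linarith
end

section
/- Let $X, \tilde{X}$ satisfy the knockoff conditions with $S = \mathrm{diag}(s)$, $s_i > 0$, $\Sigma - S/2$ invertible, and let $y = X\beta + \epsilon$. Define $\epsilon^{(1)} = (\Sigma - S/2)^{-1}(\frac{X+\tilde{X}}{2})^T\epsilon$ and $\epsilon^{(2)} = (S/2)^{-1}(\frac{X-\tilde{X}}{2})^T\epsilon$. Then the half Lasso solution $(\hat\beta, \tilde\beta)$ minimizing $\frac{1}{2}\|y - X\hat\beta - \tilde{X}\tilde\beta\|_2^2 + \lambda\|\hat\beta - \tilde\beta\|_1$ satisfies $\hat\beta = \frac{1}{2}\big(\beta + \epsilon^{(1)} + Sh(\beta + \epsilon^{(2)}, 2\lambda S_{inv})\big)$ and $\tilde\beta = \frac{1}{2}\big(\beta + \epsilon^{(1)} - Sh(\beta + \epsilon^{(2)},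 2\lambda S_{inv})\big)$, where $Sh(x, t)_i = \mathrm{sign}(x_i)(|x_i| - t_i)_+$ and $(S_{inv})_i = 1/s_i$. -/
/-!
With `A = (X + X̃)/2` and `B = (X - X̃)/2` the fit is `X b + X̃ b' = A (b + b') + B (b - b')`,
and the knockoff conditions give `AᵀB = 0`, `AᵀA = Σ - S/2`, `BᵀB = S/2`. So, up to a constant,
the half Lasso objective is `½‖y - A u‖²` in `u = b + b'` plus `∑ᵢ (sᵢ/2) (½(vᵢ - zᵢ)² + tᵢ|vᵢ|)`
in `v = b - b'`, where `z = β + ε⁽²⁾` and `tᵢ = 2λ/sᵢ`. As `(b, b') ↦ (u, v)` is onto, a minimiser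
minimises both parts separately: the normal equations, with `AᵀA` invertible, force
`u = β + ε⁽¹⁾`, and each `vᵢ` minimises a scalar Lasso problem whose unique minimiser is the soft
threshold `Sh(zᵢ, tᵢ)`.
-/

open Matrix

theorem Fintype.le_of_sum_le_sum_update {ι M : Type*} [Fintype ι] [DecidableEq ι]
    [AddCommMonoid M] [PartialOrder M] [IsOrderedCancelAddMonoid M] {α : Type*}
    (f : ι → α → M) (v : ι → α) (i : ι) (w : α)
    (h : ∑ j, f j (v j) ≤ ∑ j, f j (Function.update v i w j)) : f i (v i) ≤ f i w := by
  rw [Fintype.sum_eq_add_sum_compl i, Fintype.sum_eq_add_sum_compl i (fun j => f j _),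
    Function.update_self] at h
  refine le_of_add_le_add_right (h.trans_eq ?_)
  congr 1
  refine Finset.sum_congr rfl fun j hj => ?_
  rw [Function.update_of_ne (by simpa using hj)]

theorem exists_add_eq_and_sub_eq {E : Type*} [AddCommGroup E] [Module ℝ E] (u v : E) :
    ∃ b b' : E, b + b' = u ∧ b - b' = v :=
  ⟨(1 / 2 : ℝ) • (u + v), (1 / 2 : ℝ) • (u - v), by module, by module⟩

theorem dotProduct_diagonal_mulVec_sub_two_mul {l R : Type*} [Fintype l] [DecidableEq l]
    [CommRing R] (d v z : l → R) :
    v ⬝ᵥ diagonal d *ᵥ v - 2 * ((diagonal d *ᵥ z) ⬝ᵥ v) =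
      ∑ i, d i * ((v i - z i) ^ 2 - z i ^ 2) := by
  simp only [dotProduct, mulVec_diagonal, Finset.mul_sum, ← Finset.sum_sub_distrib]
  exact Finset.sum_congr rfl fun i _ => by ring

noncomputable def softThreshold (z t : ℝ) : ℝ := Real.sign z * max (|z| - t) 0

noncomputable def lassoScalarObjective (z t w : ℝ) : ℝ := (w - z) ^ 2 / 2 + t * |w|

section SoftThreshold

variable {z t : ℝ}

theorem softThreshold_of_abs_le (h : |z| ≤ t) : softThreshold z t = 0 := by
  simp [softThreshold, max_eq_right (sub_nonpos.mpr h)]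

theorem softThreshold_of_lt (h : t < z) (ht : 0 ≤ t) : softThreshold z t = z - t := by
  rw [softThreshold, Real.sign_of_pos (by linarith), abs_of_pos (by linarith),
    max_eq_left (by linarith), one_mul]

theorem softThreshold_of_lt_neg (h : z < -t) (ht : 0 ≤ t) : softThreshold z t = z + t := by
  rw [softThreshold, Real.sign_of_neg (by linarith), abs_of_neg (by linarith),
    max_eq_left (by linarith)]
  ring

/-- `z - softThreshold z t` is a subgradient of `t * |·|` at `softThreshold z t`. -/
theorem sub_softThreshold_mul_le (ht : 0 ≤ t) (w : ℝ) :
    (z - softThreshold z t) * (w - softThreshold z t) ≤ t * (|w| - |softThreshold z t|) := by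
  rcases le_or_gt |z| t with h | h
  · rw [softThreshold_of_abs_le h, abs_zero]
    calc (z - 0) * (w - 0) ≤ |z| * |w| := by rw [← abs_mul]; simpa using le_abs_self (z * w)
      _ ≤ t * (|w| - 0) := by rw [sub_zero]; exact mul_le_mul_of_nonneg_right h (abs_nonneg w)
  rcases lt_abs.mp h with h | h
  · rw [softThreshold_of_lt h ht, abs_of_pos (by linarith : 0 < z - t)]
    nlinarith [le_abs_self w]
  · rw [softThreshold_of_lt_neg (by linarith) ht, abs_of_neg (by linarith : z + t < 0)]
    nlinarith [neg_abs_le w]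

theorem lassoScalarObjective_softThreshold_add_le (ht : 0 ≤ t) (w : ℝ) :
    lassoScalarObjective z t (softThreshold z t) + (w - softThreshold z t) ^ 2 / 2 ≤
      lassoScalarObjective z t w := by
  unfold lassoScalarObjective
  nlinarith [sub_softThreshold_mul_le (z := z) ht w]

theorem eq_softThreshold_of_lassoScalarObjective_le (ht : 0 ≤ t) {w : ℝ}
    (h : lassoScalarObjective z t w ≤ lassoScalarObjective z t (softThreshold z t)) :
    w = softThreshold z t := by
  have := lassoScalarObjective_softThreshold_add_le (z := z) ht w
  nlinarith [sq_nonneg (w - softThreshold z t)]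

end SoftThreshold

theorem eq_softThreshold_of_forall_sum_le {ι : Type*} [Fintype ι] [DecidableEq ι]
    {c z t v : ι → ℝ} (hc : ∀ i, 0 < c i) (ht : ∀ i, 0 ≤ t i)
    (h : ∀ w : ι → ℝ, ∑ j, c j * lassoScalarObjective (z j) (t j) (v j) ≤
      ∑ j, c j * lassoScalarObjective (z j) (t j) (w j)) (i : ι) :
    v i = softThreshold (z i) (t i) :=
  eq_softThreshold_of_lassoScalarObjective_le (ht i) <| le_of_mul_le_mul_left
    (Fintype.le_of_sum_le_sum_update (fun j w => c j * lassoScalarObjective (z j) (t j) w) v i _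
      (h _)) (hc i)

section LeastSquares

variable {m k l R : Type*} [Fintype m] [Fintype k] [Fintype l]

theorem dotProduct_self_sub_mulVec [CommRing R] {A : Matrix m k R} {y : m → R} {u₀ : k → R}
    (h₀ : (Aᵀ * A) *ᵥ u₀ = Aᵀ *ᵥ y) (u : k → R) :
    (y - A *ᵥ u) ⬝ᵥ (y - A *ᵥ u) =
      (y - A *ᵥ u₀) ⬝ᵥ (y - A *ᵥ u₀) + (A *ᵥ (u - u₀)) ⬝ᵥ (A *ᵥ (u - u₀)) := by
  have hres : y - A *ᵥ u = (y - A *ᵥ u₀) - A *ᵥ (u - u₀) := by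
    rw [mulVec_sub]; abel
  have horth : (y - A *ᵥ u₀) ⬝ᵥ (A *ᵥ (u - u₀)) = 0 := by
    rw [dotProduct_mulVec, ← mulVec_transpose, mulVec_sub, mulVec_mulVec, h₀, sub_self,
      zero_dotProduct]
  rw [hres]
  generalize y - A *ᵥ u₀ = r at horth ⊢
  simp only [sub_dotProduct, dotProduct_sub, dotProduct_comm _ r, horth]
  ring

theorem eq_of_normal_eq_of_dotProduct_le [CommRing R] [LinearOrder R] [IsStrictOrderedRing R]
    [DecidableEq k] {A : Matrix m k R} {y : m → R} {u u₀ : k → R} (hA : IsUnit (Aᵀ * A))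
    (h₀ : (Aᵀ * A) *ᵥ u₀ = Aᵀ *ᵥ y)
    (hu : (y - A *ᵥ u) ⬝ᵥ (y - A *ᵥ u) ≤ (y - A *ᵥ u₀) ⬝ᵥ (y - A *ᵥ u₀)) : u = u₀ := by
  have hzero : A *ᵥ (u - u₀) = 0 := by
    rw [dotProduct_self_sub_mulVec h₀] at hu
    exact dotProduct_self_eq_zero.mp
      (le_antisymm (by linarith) (Fintype.sum_nonneg fun i => mul_self_nonneg _))
  refine sub_eq_zero.mp (mulVec_injective_of_isUnit hA ?_)
  rw [← mulVec_mulVec, hzero, mulVec_zero, mulVec_zero]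

theorem dotProduct_self_sub_sub_mulVec [CommRing R] {A : Matrix m k R} {B : Matrix m l R}
    (hAB : Aᵀ * B = 0) (y : m → R) (u : k → R) (v : l → R) :
    (y - A *ᵥ u - B *ᵥ v) ⬝ᵥ (y - A *ᵥ u - B *ᵥ v) =
      (y - A *ᵥ u) ⬝ᵥ (y - A *ᵥ u) + (v ⬝ᵥ (Bᵀ * B) *ᵥ v - 2 * ((Bᵀ *ᵥ y) ⬝ᵥ v)) := by
  have hcross : (y - A *ᵥ u) ⬝ᵥ (B *ᵥ v) = (Bᵀ *ᵥ y) ⬝ᵥ v := by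
    have horth : (B *ᵥ v) ⬝ᵥ (A *ᵥ u) = 0 := by
      rw [dotProduct_mulVec, ← mulVec_transpose, mulVec_mulVec, hAB, zero_mulVec,
        zero_dotProduct]
    rw [sub_dotProduct, dotProduct_comm (A *ᵥ u), horth, sub_zero, dotProduct_mulVec,
      mulVec_transpose]
  have hquad : (B *ᵥ v) ⬝ᵥ (B *ᵥ v) = v ⬝ᵥ (Bᵀ * B) *ᵥ v := by
    rw [dotProduct_mulVec, ← mulVec_transpose, mulVec_mulVec, dotProduct_comm]
  generalize y - A *ᵥ u = r at hcross ⊢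
  simp only [sub_dotProduct, dotProduct_sub, dotProduct_comm (B *ᵥ v) r, hcross, hquad]
  ring

end LeastSquares

section Knockoff

variable {m k R : Type*}

theorem knockoff_transpose_mul_swap [Fintype m] [DecidableEq k] [CommRing R]
    {X Xt : Matrix m k R} {s : k → R} (h2 : Xtᵀ * X = Xᵀ * X - diagonal s) :
    Xᵀ * Xt = Xᵀ * X - diagonal s := by
  rw [← transpose_transpose (Xᵀ * Xt), transpose_mul, transpose_transpose, h2, transpose_sub,
    transpose_mul, transpose_transpose, diagonal_transpose]

variable [Field R] [CharZero R]

theorem mulVec_add_mulVec_eq_half_sum_add_half_diff [Fintype k] (X Xt : Matrix m k R)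
    (b b' : k → R) :
    X *ᵥ b + Xt *ᵥ b' =
      ((1 / 2 : R) • (X + Xt)) *ᵥ (b + b') + ((1 / 2 : R) • (X - Xt)) *ᵥ (b - b') := by
  simp only [smul_mulVec, add_mulVec, sub_mulVec, mulVec_add, mulVec_sub]
  module

variable [Fintype m] [DecidableEq k] {X Xt : Matrix m k R} {s : k → R}

theorem knockoff_half_sum_transpose_mul (h2 : Xtᵀ * X = Xᵀ * X - diagonal s) :
    ((1 / 2 : R) • (X + Xt))ᵀ * X = Xᵀ * X - (1 / 2 : R) • diagonal s := by
  rw [transpose_smul, transpose_add, smul_mul, Matrix.add_mul, h2]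
  module

theorem knockoff_half_diff_transpose_mul (h2 : Xtᵀ * X = Xᵀ * X - diagonal s) :
    ((1 / 2 : R) • (X - Xt))ᵀ * X = (1 / 2 : R) • diagonal s := by
  rw [transpose_smul, transpose_sub, smul_mul, Matrix.sub_mul, h2]
  module

theorem knockoff_half_sum_transpose_mul_half_diff (h1 : Xtᵀ * Xt = Xᵀ * X)
    (h2 : Xtᵀ * X = Xᵀ * X - diagonal s) :
    ((1 / 2 : R) • (X + Xt))ᵀ * ((1 / 2 : R) • (X - Xt)) = 0 := by
  rw [transpose_smul, transpose_add, smul_mul, Matrix.mul_smul, Matrix.add_mul, Matrix.mul_sub,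
    Matrix.mul_sub, h1, h2, knockoff_transpose_mul_swap h2]
  module

theorem knockoff_half_sum_transpose_mul_self (h1 : Xtᵀ * Xt = Xᵀ * X)
    (h2 : Xtᵀ * X = Xᵀ * X - diagonal s) :
    ((1 / 2 : R) • (X + Xt))ᵀ * ((1 / 2 : R) • (X + Xt)) = Xᵀ * X - (1 / 2 : R) • diagonal s := by
  rw [transpose_smul, transpose_add, smul_mul, Matrix.mul_smul, Matrix.add_mul, Matrix.mul_add,
    Matrix.mul_add, h1, h2, knockoff_transpose_mul_swap h2]
  module

theorem knockoff_half_diff_transpose_mul_self (h1 : Xtᵀ * Xt = Xᵀ * X)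
    (h2 : Xtᵀ * X = Xᵀ * X - diagonal s) :
    ((1 / 2 : R) • (X - Xt))ᵀ * ((1 / 2 : R) • (X - Xt)) = (1 / 2 : R) • diagonal s := by
  rw [transpose_smul, transpose_sub, smul_mul, Matrix.mul_smul, Matrix.sub_mul, Matrix.mul_sub,
    Matrix.mul_sub, h1, h2, knockoff_transpose_mul_swap h2]
  module

theorem knockoff_half_sum_normal_eq [Fintype k] (h1 : Xtᵀ * Xt = Xᵀ * X)
    (h2 : Xtᵀ * X = Xᵀ * X - diagonal s) (hM : IsUnit (Xᵀ * X - (1 / 2 : R) • diagonal s))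
    {β ε₁ : k → R} {ε y : m → R} (hy : y = X *ᵥ β + ε)
    (hε₁ : ε₁ = (Xᵀ * X - (1 / 2 : R) • diagonal s)⁻¹ *ᵥ (((1 / 2 : R) • (X + Xt))ᵀ *ᵥ ε)) :
    (((1 / 2 : R) • (X + Xt))ᵀ * ((1 / 2 : R) • (X + Xt))) *ᵥ (β + ε₁) =
      ((1 / 2 : R) • (X + Xt))ᵀ *ᵥ y := by
  simp only [knockoff_half_sum_transpose_mul_self h1 h2, hy, hε₁, mulVec_add, mulVec_mulVec,
    mul_nonsing_inv_cancel_left _ _ ((isUnit_iff_isUnit_det _).mp hM),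
    knockoff_half_sum_transpose_mul h2]

theorem knockoff_half_diff_transpose_mulVec [Fintype k] (h2 : Xtᵀ * X = Xᵀ * X - diagonal s)
    (hs : ∀ i, s i ≠ 0) {β ε₂ : k → R} {ε y : m → R} (hy : y = X *ᵥ β + ε)
    (hε₂ : ε₂ = ((1 / 2 : R) • diagonal s)⁻¹ *ᵥ (((1 / 2 : R) • (X - Xt))ᵀ *ᵥ ε)) :
    ((1 / 2 : R) • (X - Xt))ᵀ *ᵥ y = diagonal ((1 / 2 : R) • s) *ᵥ (β + ε₂) := by
  have hD : IsUnit ((1 / 2 : R) • diagonal s).det := by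
    rw [← diagonal_smul, det_diagonal, isUnit_iff_ne_zero, Finset.prod_ne_zero_iff]
    exact fun i _ => mul_ne_zero (by norm_num) (hs i)
  simp only [diagonal_smul, hy, hε₂, mulVec_add, mulVec_mulVec, mul_nonsing_inv_cancel_left _ _ hD,
    knockoff_half_diff_transpose_mul h2]

end Knockoff

noncomputable def halfLassoObjective {m k : Type*} [Fintype m] [Fintype k]
    (X Xt : Matrix m k ℝ) (y : m → ℝ) (lam : ℝ) (b b' : k → ℝ) : ℝ :=
  (1 / 2) * (∑ i, (y i - (X *ᵥ b) i - (Xt *ᵥ b') i) ^ 2) + lam * ∑ j, |b j - b' j|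

theorem halfLassoObjective_eq {m k : Type*} [Fintype m] [Fintype k] [DecidableEq k]
    {X Xt : Matrix m k ℝ} {s : k → ℝ} (h1 : Xtᵀ * Xt = Xᵀ * X)
    (h2 : Xtᵀ * X = Xᵀ * X - diagonal s) (hs : ∀ i, s i ≠ 0) {y : m → ℝ} {z : k → ℝ}
    (hz : ((1 / 2 : ℝ) • (X - Xt))ᵀ *ᵥ y = diagonal ((1 / 2 : ℝ) • s) *ᵥ z) (lam : ℝ)
    (b b' : k → ℝ) :
    halfLassoObjective X Xt y lam b b' =
      (1 / 2) * ((y - ((1 / 2 : ℝ) • (X + Xt)) *ᵥ (b + b')) ⬝ᵥ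
          (y - ((1 / 2 : ℝ) • (X + Xt)) *ᵥ (b + b')))
        + ∑ i, s i / 2 * lassoScalarObjective (z i) (2 * lam * (1 / s i)) ((b - b') i)
        - ∑ i, s i * z i ^ 2 / 4 := by
  have hres : ∑ i, (y i - (X *ᵥ b) i - (Xt *ᵥ b') i) ^ 2 =
      (y - ((1 / 2 : ℝ) • (X + Xt)) *ᵥ (b + b') - ((1 / 2 : ℝ) • (X - Xt)) *ᵥ (b - b')) ⬝ᵥ
        (y - ((1 / 2 : ℝ) • (X + Xt)) *ᵥ (b + b') - ((1 / 2 : ℝ) • (X - Xt)) *ᵥ (b - b')) := by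
    rw [sub_sub y, ← mulVec_add_mulVec_eq_half_sum_add_half_diff]
    simp only [dotProduct, sq, Pi.sub_apply, Pi.add_apply, sub_sub]
  have hcoord : ∀ i, s i / 2 * lassoScalarObjective (z i) (2 * lam * (1 / s i)) ((b - b') i)
      - s i * z i ^ 2 / 4 = (1 / 2) * (((1 / 2 : ℝ) • s) i * (((b - b') i - z i) ^ 2 - z i ^ 2))
        + lam * |b i - b' i| := by
    intro i
    have := hs i
    simp only [lassoScalarObjective, Pi.sub_apply, Pi.smul_apply, smul_eq_mul]
    field_simp
    ring
  rw [halfLassoObjective, hres,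
    dotProduct_self_sub_sub_mulVec (knockoff_half_sum_transpose_mul_half_diff h1 h2),
    knockoff_half_diff_transpose_mul_self h1 h2, ← diagonal_smul, hz,
    dotProduct_diagonal_mulVec_sub_two_mul, add_sub_assoc, ← Finset.sum_sub_distrib,
    Finset.sum_congr rfl fun i _ => hcoord i, Finset.sum_add_distrib, ← Finset.mul_sum,
    ← Finset.mul_sum]
  ring

theorem half_lasso_solution_formula (n p : ℕ)
    (X Xt : Matrix (Fin n) (Fin p) ℝ) (s : Fin p → ℝ)
    (h1 : Xtᵀ * Xt = Xᵀ * X)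
    (h2 : Xtᵀ * X = Xᵀ * X - Matrix.diagonal s)
    (hspos : ∀ i, 0 < s i)
    (hinv : IsUnit (Xᵀ * X - (1 / 2 : ℝ) • Matrix.diagonal s))
    (lam : ℝ) (hlam : 0 < lam)
    (β : Fin p → ℝ) (ε : Fin n → ℝ) (y : Fin n → ℝ)
    (hy : y = X *ᵥ β + ε)
    (ε1 ε2 : Fin p → ℝ)
    (hε1 : ε1 = (Xᵀ * X - (1 / 2 : ℝ) • Matrix.diagonal s)⁻¹ *ᵥ
        (((1 / 2 : ℝ) • (X + Xt))ᵀ *ᵥ ε))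
    (hε2 : ε2 = ((1 / 2 : ℝ) • Matrix.diagonal s)⁻¹ *ᵥ
        (((1 / 2 : ℝ) • (X - Xt))ᵀ *ᵥ ε))
    (bh bt : Fin p → ℝ)
    (hmin : ∀ b b' : Fin p → ℝ,
      (1 / 2) * (∑ k, (y k - (X *ᵥ bh) k - (Xt *ᵥ bt) k) ^ 2)
          + lam * ∑ i, |bh i - bt i| ≤
      (1 / 2) * (∑ k, (y k - (X *ᵥ b) k - (Xt *ᵥ b') k) ^ 2)
          + lam * ∑ i, |b i - b' i|) :
    (∀ i, bh i = (1 / 2) * (β i + ε1 i +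
        Real.sign (β i + ε2 i) * max (|β i + ε2 i| - 2 * lam * (1 / s i)) 0)) ∧
    (∀ i, bt i = (1 / 2) * (β i + ε1 i -
        Real.sign (β i + ε2 i) * max (|β i + ε2 i| - 2 * lam * (1 / s i)) 0)) := by
  have hs : ∀ i, s i ≠ 0 := fun i => (hspos i).ne'
  have hobj := halfLassoObjective_eq h1 h2 hs (knockoff_half_diff_transpose_mulVec h2 hs hy hε2) lam
  have hu : bh + bt = β + ε1 := by
    refine eq_of_normal_eq_of_dotProduct_le (knockoff_half_sum_transpose_mul_self h1 h2 ▸ hinv)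
      (knockoff_half_sum_normal_eq h1 h2 hinv hy hε1) ?_
    obtain ⟨b, b', hsum, hdiff⟩ := exists_add_eq_and_sub_eq (β + ε1) (bh - bt)
    have h : halfLassoObjective X Xt y lam bh bt ≤ halfLassoObjective X Xt y lam b b' := hmin b b'
    rw [hobj, hobj, hsum, hdiff] at h
    linarith
  have hv := eq_softThreshold_of_forall_sum_le (c := fun i => s i / 2) (z := β + ε2)
    (t := fun i => 2 * lam * (1 / s i)) (v := bh - bt) (fun i => half_pos (hspos i))
    (fun i => by positivity [hspos i]) fun w => by
      obtain ⟨b, b', hsum, hdiff⟩ := exists_add_eq_and_sub_eq (bh + bt) w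
      have h : halfLassoObjective X Xt y lam bh bt ≤ halfLassoObjective X Xt y lam b b' :=
        hmin b b'
      rw [hobj, hobj, hsum, hdiff] at h
      linarith
  refine ⟨fun i => ?_, fun i => ?_⟩ <;>
  · have hui := congrFun hu i
    have hvi := hv i
    simp only [Pi.add_apply, Pi.sub_apply, softThreshold] at hui hvi
    linarith
end

section
/- Pairwise exchangeability of the feature-response product: Let $X, \tilde{X}$ satisfy the knockoff conditions, let $U \in \mathbb{R}^{n\times(n-2p)}$ be orthonormal with $U^T[X\ \tilde{X}] = 0$, and let $y \sim N(X\beta, \sigma^2 I_n)$. For any subset $\hat{S}$ of null indices (i.e., $\beta_j = 0$ for all $j \in \hat{S}$), the random vector $[\,[X\ \tilde{X}]_{swap(\hat{S})}\ U\,]^T y$ has the same distribution as $[X\ \tilde{X}\ U]^T y$, where $swap(\hat{S})$ exchanges columns $X_j$ and $\tilde{X}_j$ for all $j \in \hat{S}$. -/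
/-!
Put `V = X - X̃`. The knockoff conditions give `Vᵀ V = 2 diag(s)` and `Vᵀ X = diag(s)`, so the
product `R` of the reflections in the (pairwise orthogonal) columns `V j`, `j ∈ Ŝ`, is an
orthogonal matrix with `R X = X_swap`, `R X̃ = X̃_swap`, `R U = U` (as `Vᵀ U = 0`) and
`R X β = X β` (as `β` vanishes on `Ŝ`). Hence, for `y = X β + ε`,
`[X_swap X̃_swap U]ᵀ y = [X X̃ U]ᵀ (X β + Rᵀ ε)`, and `Rᵀ ε` has the law of `ε` because the
isotropic Gaussian is invariant under orthogonal maps.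
-/

open Matrix MeasureTheory ProbabilityTheory

namespace Matrix

lemma col_eq_zero_of_diag_transpose_mul_self_eq_zero {m ι : Type*} [Fintype m]
    {V : Matrix m ι ℝ} {j : ι} (hj : (Vᵀ * V).diag j = 0) (k : m) : V k j = 0 := by
  have : (fun k => V k j) ⬝ᵥ (fun k => V k j) = 0 := hj
  exact congrFun (dotProduct_self_eq_zero.1 this) k

variable {m ι : Type*} [Fintype m] [Fintype ι] [DecidableEq m] [DecidableEq ι]

/-- For pairwise orthogonal columns, the product of the reflections in the columns `V j`,
`j ∈ S`. A zero column gets the junk coefficient `2 / 0 = 0`, which is harmless. -/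
noncomputable def colReflection (V : Matrix m ι ℝ) (S : Finset ι) : Matrix m m ℝ :=
  1 - V * diagonal (fun j => if j ∈ S then 2 / (Vᵀ * V).diag j else 0) * Vᵀ

omit [DecidableEq m] in
lemma mul_diagonal_mul_transpose_mul_self {V : Matrix m ι ℝ} (hV : V.HasOrthogonalCols)
    (S : Finset ι) :
    V * diagonal (fun j => if j ∈ S then 2 / (Vᵀ * V).diag j else 0) * (Vᵀ * V) =
      (2 : ℝ) • (V * diagonal fun j => if j ∈ S then (1 : ℝ) else 0) := by
  set c := fun j => if j ∈ S then 2 / (Vᵀ * V).diag j else 0 with hc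
  rw [← (transpose_mul_self_isDiag_iff_hasOrthogonalCols.2 hV).diagonal_diag, Matrix.mul_assoc,
    diagonal_mul_diagonal]
  ext k j
  simp only [mul_diagonal, smul_apply, hc, diag_apply, smul_eq_mul]
  by_cases hjS : j ∈ S
  · by_cases hd : (Vᵀ * V) j j = 0
    · simp [col_eq_zero_of_diag_transpose_mul_self_eq_zero hd]
    · simp only [hjS, if_true]
      rw [div_mul_cancel₀ _ hd, mul_one, mul_comm]
  · simp [hjS]

lemma colReflection_mul_of_transpose_mul_eq_zero {n : Type*} {V : Matrix m ι ℝ} (S : Finset ι)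
    {M : Matrix m n ℝ} (hM : Vᵀ * M = 0) : colReflection V S * M = M := by
  rw [colReflection, Matrix.sub_mul, Matrix.one_mul, Matrix.mul_assoc, hM, Matrix.mul_zero,
    sub_zero]

lemma colReflection_mul_of_two_smul {V : Matrix m ι ℝ} (hV : V.HasOrthogonalCols)
    (S : Finset ι) {M : Matrix m ι ℝ} {t : ℝ} (hM : (2 : ℝ) • (Vᵀ * M) = t • (Vᵀ * V)) :
    colReflection V S * M = M - t • (V * diagonal fun j => if j ∈ S then (1 : ℝ) else 0) := by
  have h : (2 : ℝ) • (V * diagonal (fun j => if j ∈ S then 2 / (Vᵀ * V).diag j else 0) * Vᵀ * M) =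
      (2 : ℝ) • (t • (V * diagonal fun j => if j ∈ S then (1 : ℝ) else 0)) := by
    rw [Matrix.mul_assoc _ Vᵀ, ← Matrix.mul_smul, hM, Matrix.mul_smul,
      mul_diagonal_mul_transpose_mul_self hV, smul_comm]
  rw [colReflection, Matrix.sub_mul, Matrix.one_mul, smul_right_injective _ two_ne_zero h]

lemma colReflection_transpose (V : Matrix m ι ℝ) (S : Finset ι) :
    (colReflection V S)ᵀ = colReflection V S := by
  simp [colReflection, transpose_mul, Matrix.mul_assoc]

lemma colReflection_mem_orthogonalGroup {V : Matrix m ι ℝ} (hV : V.HasOrthogonalCols)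
    (S : Finset ι) : colReflection V S ∈ orthogonalGroup m ℝ := by
  rw [mem_orthogonalGroup_iff', colReflection_transpose]
  have hRV := colReflection_mul_of_two_smul hV S (M := V) (t := 2) rfl
  obtain ⟨c, hR, hec⟩ : ∃ c : ι → ℝ, colReflection V S = 1 - V * diagonal c * Vᵀ ∧
      (diagonal fun j => if j ∈ S then (1 : ℝ) else 0) * diagonal c = diagonal c := by
    refine ⟨_, rfl, ?_⟩
    rw [diagonal_mul_diagonal]
    congr 1 with j
    by_cases hj : j ∈ S <;> simp [hj]
  calc colReflection V S * colReflection V S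
      = colReflection V S - colReflection V S * V * diagonal c * Vᵀ := by
        nth_rewrite 2 [hR]
        simp only [Matrix.mul_sub, Matrix.mul_one, Matrix.mul_assoc]
    _ = 1 := by
        rw [hRV, Matrix.sub_mul, Matrix.sub_mul, Matrix.smul_mul, Matrix.smul_mul,
          Matrix.mul_assoc V _ (diagonal c), hec, hR, two_smul]
        abel

end Matrix

section GaussianInvariance

open WithLp

variable {ι : Type*} [Fintype ι]

lemma map_mulVec_pi_gaussianReal_zero_one [DecidableEq ι] {Q : Matrix ι ι ℝ}
    (hQ : Q ∈ orthogonalGroup ι ℝ) :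
    (Measure.pi fun _ : ι => gaussianReal 0 1).map (Q *ᵥ ·) =
      Measure.pi fun _ : ι => gaussianReal 0 1 := by
  let f : EuclideanSpace ℝ ι ≃ₗᵢ[ℝ] EuclideanSpace ℝ ι :=
    Unitary.linearIsometryEquiv ⟨toEuclideanCLM (𝕜 := ℝ) Q, Unitary.map_mem _ hQ⟩
  have hf : ⇑f ∘ toLp 2 = toLp 2 ∘ (Q *ᵥ ·) := rfl
  apply (MeasurableEquiv.toLp 2 (ι → ℝ)).map_measurableEquiv_injective
  rw [MeasurableEquiv.coe_toLp, Measure.map_map (by fun_prop) (by fun_prop), ← hf,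
    ← Measure.map_map (by fun_prop) (by fun_prop), map_pi_eq_stdGaussian, stdGaussian_map]

lemma pi_gaussianReal_eq_map_smul (σ : NNReal) :
    Measure.pi (fun _ : ι => gaussianReal 0 (σ ^ 2)) =
      (Measure.pi fun _ : ι => gaussianReal 0 1).map ((σ : ℝ) • ·) := by
  have : (fun x : ι → ℝ => (σ : ℝ) • x) = fun x i => (σ : ℝ) * x i := rfl
  rw [this, Measure.pi_map_pi (fun _ => by fun_prop)]
  congr with i : 1
  rw [gaussianReal_map_const_mul]
  congr
  · simp
  · ext; simp

lemma map_mulVec_pi_gaussianReal [DecidableEq ι] {Q : Matrix ι ι ℝ}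
    (hQ : Q ∈ orthogonalGroup ι ℝ) (σ : NNReal) :
    (Measure.pi fun _ : ι => gaussianReal 0 (σ ^ 2)).map (Q *ᵥ ·) =
      Measure.pi fun _ : ι => gaussianReal 0 (σ ^ 2) := by
  have hcomm : (Q *ᵥ ·) ∘ ((σ : ℝ) • ·) = ((σ : ℝ) • ·) ∘ (Q *ᵥ ·) := by
    ext x : 1; exact mulVec_smul Q (σ : ℝ) x
  rw [pi_gaussianReal_eq_map_smul, Measure.map_map (by fun_prop) (by fun_prop), hcomm,
    ← Measure.map_map (by fun_prop) (by fun_prop), map_mulVec_pi_gaussianReal_zero_one hQ]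

lemma map_transpose_mul_mulVec_add_pi_gaussianReal {κ : Type*} [Fintype κ] [DecidableEq ι]
    {Q : Matrix ι ι ℝ} (hQ : Q ∈ orthogonalGroup ι ℝ) (A : Matrix ι κ ℝ) {μ : ι → ℝ}
    (hμ : Q *ᵥ μ = μ) (σ : NNReal) :
    (Measure.pi fun _ : ι => gaussianReal 0 (σ ^ 2)).map (fun ε => (Q * A)ᵀ *ᵥ (μ + ε)) =
      (Measure.pi fun _ : ι => gaussianReal 0 (σ ^ 2)).map (fun ε => Aᵀ *ᵥ (μ + ε)) := by
  have hQQ : Qᵀ * Q = 1 := (mem_orthogonalGroup_iff' ι ℝ).1 hQ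
  have hQt : Qᵀ ∈ orthogonalGroup ι ℝ := by
    rw [mem_orthogonalGroup_iff', transpose_transpose]
    exact (mem_orthogonalGroup_iff ι ℝ).1 hQ
  have hμ' : Qᵀ *ᵥ μ = μ := by
    conv_lhs => rw [← hμ]
    rw [mulVec_mulVec, hQQ, one_mulVec]
  have hf : (fun ε => (Q * A)ᵀ *ᵥ (μ + ε)) = (fun ε => Aᵀ *ᵥ (μ + ε)) ∘ (Qᵀ *ᵥ ·) := by
    ext ε : 1
    simp [transpose_mul, ← mulVec_mulVec, mulVec_add, hμ']
  rw [hf, ← Measure.map_map (by fun_prop : Continuous _).measurable (by fun_prop),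
    map_mulVec_pi_gaussianReal hQt]

end GaussianInvariance

section Knockoff

variable {m ι : Type*} [Fintype m] [DecidableEq ι] {X Xt : Matrix m ι ℝ} {s : ι → ℝ}

lemma knockoff_sub_transpose_mul_left [Fintype ι] (h2 : Xtᵀ * X = Xᵀ * X - diagonal s) :
    (X - Xt)ᵀ * X = diagonal s := by
  rw [transpose_sub, Matrix.sub_mul, h2, sub_sub_cancel]

lemma knockoff_sub_transpose_mul_right [Fintype ι] (h1 : Xtᵀ * Xt = Xᵀ * X)
    (h2 : Xtᵀ * X = Xᵀ * X - diagonal s) :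
    (X - Xt)ᵀ * Xt = -diagonal s := by
  have h2' : Xᵀ * Xt = Xᵀ * X - diagonal s := by
    simpa [transpose_mul] using congrArg transpose h2
  rw [transpose_sub, Matrix.sub_mul, h2', h1, sub_sub_cancel_left]

lemma knockoff_sub_transpose_mul_self [Fintype ι] (h1 : Xtᵀ * Xt = Xᵀ * X)
    (h2 : Xtᵀ * X = Xᵀ * X - diagonal s) :
    (X - Xt)ᵀ * (X - Xt) = (2 : ℝ) • diagonal s := by
  rw [Matrix.mul_sub, knockoff_sub_transpose_mul_left h2, knockoff_sub_transpose_mul_right h1 h2,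
    sub_neg_eq_add, two_smul]

lemma hasOrthogonalCols_knockoff_sub [Fintype ι] (h1 : Xtᵀ * Xt = Xᵀ * X)
    (h2 : Xtᵀ * X = Xᵀ * X - diagonal s) : (X - Xt).HasOrthogonalCols := by
  rw [← transpose_mul_self_isDiag_iff_hasOrthogonalCols, knockoff_sub_transpose_mul_self h1 h2]
  exact (isDiag_diagonal s).smul 2

variable [DecidableEq m] [Fintype ι]

lemma colReflection_knockoff_mul_left (h1 : Xtᵀ * Xt = Xᵀ * X)
    (h2 : Xtᵀ * X = Xᵀ * X - diagonal s) (S : Finset ι) :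
    colReflection (X - Xt) S * X = of fun k j => if j ∈ S then Xt k j else X k j := by
  rw [colReflection_mul_of_two_smul (hasOrthogonalCols_knockoff_sub h1 h2) S (t := 1)
    (by rw [knockoff_sub_transpose_mul_self h1 h2, knockoff_sub_transpose_mul_left h2, one_smul])]
  ext k j
  by_cases hj : j ∈ S <;> simp [hj]

lemma colReflection_knockoff_mul_right (h1 : Xtᵀ * Xt = Xᵀ * X)
    (h2 : Xtᵀ * X = Xᵀ * X - diagonal s) (S : Finset ι) :
    colReflection (X - Xt) S * Xt = of fun k j => if j ∈ S then X k j else Xt k j := by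
  rw [colReflection_mul_of_two_smul (hasOrthogonalCols_knockoff_sub h1 h2) S (t := -1)
    (by rw [knockoff_sub_transpose_mul_self h1 h2, knockoff_sub_transpose_mul_right h1 h2,
      smul_neg, neg_smul, one_smul])]
  ext k j
  by_cases hj : j ∈ S <;> simp [hj]

end Knockoff

theorem knockoff_pairwise_exchangeability_general (n p : ℕ)
    (X Xt : Matrix (Fin n) (Fin p) ℝ) (s : Fin p → ℝ)
    (h1 : Xtᵀ * Xt = Xᵀ * X)
    (h2 : Xtᵀ * X = Xᵀ * X - Matrix.diagonal s)
    (U : Matrix (Fin n) (Fin (n - 2 * p)) ℝ)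
    (hUX : Uᵀ * X = 0) (hUXt : Uᵀ * Xt = 0)
    (β : Fin p → ℝ) (σ : NNReal)
    (S : Finset (Fin p)) (hnull : ∀ j ∈ S, β j = 0) :
    Measure.map
      (fun ε : Fin n → ℝ =>
        fun c : Fin p ⊕ Fin p ⊕ Fin (n - 2 * p) =>
          Sum.elim (fun j k => if j ∈ S then Xt k j else X k j)
            (Sum.elim (fun j k => if j ∈ S then X k j else Xt k j)
              (fun j k => U k j)) c ⬝ᵥ (X *ᵥ β + ε))
      (Measure.pi fun _ : Fin n => gaussianReal 0 (σ ^ 2)) =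
    Measure.map
      (fun ε : Fin n → ℝ =>
        fun c : Fin p ⊕ Fin p ⊕ Fin (n - 2 * p) =>
          Sum.elim (fun j k => X k j)
            (Sum.elim (fun j k => Xt k j) (fun j k => U k j)) c ⬝ᵥ (X *ᵥ β + ε))
      (Measure.pi fun _ : Fin n => gaussianReal 0 (σ ^ 2)) := by
  have hR := colReflection_mem_orthogonalGroup (hasOrthogonalCols_knockoff_sub h1 h2) S
  have hRU : colReflection (X - Xt) S * U = U := by
    refine colReflection_mul_of_transpose_mul_eq_zero S ?_
    rw [transpose_sub, Matrix.sub_mul, ← transpose_transpose U, ← transpose_mul, ← transpose_mul,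
      hUX, hUXt, transpose_zero, sub_zero]
  have hRμ : colReflection (X - Xt) S *ᵥ (X *ᵥ β) = X *ᵥ β := by
    rw [mulVec_mulVec, colReflection_knockoff_mul_left h1 h2]
    ext k
    simp only [mulVec, dotProduct, of_apply]
    refine Finset.sum_congr rfl fun j _ => ?_
    by_cases hj : j ∈ S <;> simp [hj, hnull]
  have key := map_transpose_mul_mulVec_add_pi_gaussianReal hR (fromCols X (fromCols Xt U)) hRμ σ
  rw [mul_fromCols, mul_fromCols, colReflection_knockoff_mul_left h1 h2,
    colReflection_knockoff_mul_right h1 h2, hRU] at key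
  -- `key` is the claim with the stacked design matrices written via `fromCols`.
  convert key using 2 <;> funext ε c <;> rcases c with j | j | j <;> rfl

theorem knockoff_pairwise_exchangeability (n p : ℕ)
    (X Xt : Matrix (Fin n) (Fin p) ℝ) (s : Fin p → ℝ)
    (h1 : Xtᵀ * Xt = Xᵀ * X)
    (h2 : Xtᵀ * X = Xᵀ * X - Matrix.diagonal s)
    (U : Matrix (Fin n) (Fin (n - 2 * p)) ℝ)
    (hU : Uᵀ * U = 1) (hUX : Uᵀ * X = 0) (hUXt : Uᵀ * Xt = 0)
    (β : Fin p → ℝ) (σ : NNReal)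
    (S : Finset (Fin p)) (hnull : ∀ j ∈ S, β j = 0) :
    Measure.map
      (fun ε : Fin n → ℝ =>
        fun c : Fin p ⊕ Fin p ⊕ Fin (n - 2 * p) =>
          Sum.elim (fun j k => if j ∈ S then Xt k j else X k j)
            (Sum.elim (fun j k => if j ∈ S then X k j else Xt k j)
              (fun j k => U k j)) c ⬝ᵥ (X *ᵥ β + ε))
      (Measure.pi fun _ : Fin n => gaussianReal 0 (σ ^ 2)) =
    Measure.map
      (fun ε : Fin n → ℝ =>
        fun c : Fin p ⊕ Fin p ⊕ Fin (n - 2 * p) =>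
          Sum.elim (fun j k => X k j)
            (Sum.elim (fun j k => Xt k j) (fun j k => U k j)) c ⬝ᵥ (X *ᵥ β + ε))
      (Measure.pi fun _ : Fin n => gaussianReal 0 (σ ^ 2)) :=
  knockoff_pairwise_exchangeability_general n p X Xt s h1 h2 U hUX hUXt β σ S hnull
end
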